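/- Let k, l ∈ ℝ² be nonzero vectors and set m := k + l, assumed nonzero. Then sg(k)·|k| − sg(l)·|l| ≠ sg(m)·|m| and sg(k)·|k| − sg(l)·|l| ≠ −sg(m)·|m|. In other words, the sets { (k, l) : k ≠ 0, l ≠ 0, m = k + l ≠ 0, sg(k)|k| − sg(l)|l| = ±sg(m)|m| } are both empty. -/

import Mathlib

/-!
Write `F v = sg v * ‖v‖`, so that `|F v| = ‖v‖` and `F (t • v) = t * F v` for every real `t`.
If `F k - F l = ± F m` with `m = k + l`, taking absolute values gives `‖m - l‖ = |‖m‖ ± ‖l‖|`,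
an equality case of the triangle inequality, so `m = r • l` and `k = (r - 1) • l`.
Homogeneity of `F` turns the relation into `(r - 2) F l = ± r F l` with `F l ≠ 0`, which
forces either `-2 = 0` or `r = 1`, i.e. `k = 0`.
-/

/-- The generalized sign of a nonzero vector `k ∈ ℝ²`: `sg k = 1` iff `k₁ > 0` or
(`k₁ = 0` and `k₂ > 0`), and `sg k = −1` otherwise. -/
noncomputable def sg (k : EuclideanSpace ℝ (Fin 2)) : ℝ :=
  if 0 < k 0 ∨ (k 0 = 0 ∧ 0 < k 1) then 1 else -1

section StrictConvex

variable {E : Type*} [NormedAddCommGroup E] [NormedSpace ℝ E] [StrictConvexSpace ℝ E]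

theorem exists_eq_smul_of_norm_sub_eq_abs {x y : E} (hy : y ≠ 0) {δ : ℝ}
    (hδ : δ = 1 ∨ δ = -1) (h : ‖x - y‖ = |‖x‖ + δ * ‖y‖|) : ∃ r : ℝ, x = r • y := by
  rcases hδ with rfl | rfl
  · have hray : SameRay ℝ x (-y) := by
      rw [sameRay_iff_norm_add, ← sub_eq_add_neg, h, norm_neg, one_mul,
        abs_of_nonneg (by positivity)]
    obtain ⟨r, -, hr⟩ := hray.exists_nonneg_right (neg_ne_zero.mpr hy)
    exact ⟨-r, by rw [hr, smul_neg, neg_smul]⟩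
  · have hray : SameRay ℝ x y := by
      rw [sameRay_iff_norm_sub, h, neg_one_mul, ← sub_eq_add_neg]
    obtain ⟨r, -, hr⟩ := hray.exists_nonneg_right hy
    exact ⟨r, hr⟩

end StrictConvex

theorem sg_eq_one_or_eq_neg_one (k : EuclideanSpace ℝ (Fin 2)) : sg k = 1 ∨ sg k = -1 := by
  unfold sg; split_ifs <;> simp

theorem sg_mul_self (k : EuclideanSpace ℝ (Fin 2)) : sg k * sg k = 1 := by
  rcases sg_eq_one_or_eq_neg_one k with h | h <;> norm_num [h]

theorem abs_sg (k : EuclideanSpace ℝ (Fin 2)) : |sg k| = 1 := by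
  rcases sg_eq_one_or_eq_neg_one k with h | h <;> simp [h]

theorem abs_sg_mul_norm (k : EuclideanSpace ℝ (Fin 2)) : |sg k * ‖k‖| = ‖k‖ := by
  rw [abs_mul, abs_sg, one_mul, abs_norm]

theorem sg_mul_norm_ne_zero {k : EuclideanSpace ℝ (Fin 2)} (hk : k ≠ 0) : sg k * ‖k‖ ≠ 0 := by
  rw [← abs_ne_zero, abs_sg_mul_norm]
  exact norm_ne_zero_iff.mpr hk

theorem sg_smul_of_pos {t : ℝ} (ht : 0 < t) (k : EuclideanSpace ℝ (Fin 2)) :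
    sg (t • k) = sg k := by
  simp [sg, mul_pos_iff_of_pos_left ht, ht.ne']

theorem sg_neg {k : EuclideanSpace ℝ (Fin 2)} (hk : k ≠ 0) : sg (-k) = -sg k := by
  have hcoord : k 0 ≠ 0 ∨ k 1 ≠ 0 := by
    by_contra! h
    exact hk (by ext i; fin_cases i <;> simp [h.1, h.2])
  unfold sg
  simp only [PiLp.neg_apply, Left.neg_pos_iff, neg_eq_zero]
  rcases lt_trichotomy (k 0) 0 with h0 | h0 | h0
  · simp [h0, h0.ne, h0.not_gt]
  · rcases lt_or_gt_of_ne (hcoord.resolve_left (not_not.mpr h0)) with h1 | h1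
    · simp [h0, h1, h1.not_gt]
    · simp [h0, h1, h1.not_gt]
  · simp [h0, h0.ne', h0.not_gt]

theorem sg_neg_mul_norm (k : EuclideanSpace ℝ (Fin 2)) :
    sg (-k) * ‖-k‖ = -(sg k * ‖k‖) := by
  rcases eq_or_ne k 0 with rfl | hk
  · simp
  · rw [sg_neg hk, norm_neg, neg_mul]

theorem sg_smul_mul_norm (t : ℝ) (k : EuclideanSpace ℝ (Fin 2)) :
    sg (t • k) * ‖t • k‖ = t * (sg k * ‖k‖) := by
  rcases lt_trichotomy t 0 with ht | rfl | ht
  · have ht' : 0 < -t := neg_pos.mpr ht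
    rw [show t • k = -((-t) • k) by rw [neg_smul, neg_neg], sg_neg_mul_norm,
      sg_smul_of_pos ht', norm_smul, Real.norm_of_nonneg ht'.le]
    ring
  · simp
  · rw [sg_smul_of_pos ht, norm_smul, Real.norm_of_nonneg ht.le]
    ring

theorem sg_mul_norm_sub_ne {k l : EuclideanSpace ℝ (Fin 2)} (hk : k ≠ 0) (hl : l ≠ 0) {ε : ℝ}
    (hε : ε = 1 ∨ ε = -1) :
    sg k * ‖k‖ - sg l * ‖l‖ ≠ ε * (sg (k + l) * ‖k + l‖) := by
  intro heq
  set m := k + l with hm_def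
  have hε_sq : ε * ε = 1 := by rcases hε with rfl | rfl <;> norm_num
  have hδ : ε * sg m * sg l = 1 ∨ ε * sg m * sg l = -1 := by
    rcases hε with rfl | rfl <;> rcases sg_eq_one_or_eq_neg_one m with h | h <;>
      rcases sg_eq_one_or_eq_neg_one l with h' | h' <;> norm_num [h, h']
  have hk_sub : k = m - l := by rw [hm_def, add_sub_cancel_right]
  have hnorm : ‖m - l‖ = |‖m‖ + ε * sg m * sg l * ‖l‖| := by
    have hfactor : sg l * ‖l‖ + ε * (sg m * ‖m‖) =
        ε * sg m * (‖m‖ + ε * sg m * sg l * ‖l‖) := by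
      linear_combination (-(sg l * ‖l‖) * sg m * sg m) * hε_sq - sg l * ‖l‖ * sg_mul_self m
    have hε_abs : |ε| = 1 := by rcases hε with rfl | rfl <;> norm_num
    rw [← hk_sub, ← abs_sg_mul_norm k,
      show sg k * ‖k‖ = sg l * ‖l‖ + ε * (sg m * ‖m‖) by linarith, hfactor, abs_mul, abs_mul,
      hε_abs, abs_sg, one_mul, one_mul]
  obtain ⟨r, hr⟩ := exists_eq_smul_of_norm_sub_eq_abs hl hδ hnorm
  have hk_eq : k = (r - 1) • l := by rw [sub_smul, one_smul, ← hr, hk_sub]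
  rw [hk_eq, hr, sg_smul_mul_norm, sg_smul_mul_norm] at heq
  have hF := sg_mul_norm_ne_zero hl
  have hcoef : r - 2 = ε * r := mul_right_cancel₀ hF (by linear_combination heq)
  rcases hε with rfl | rfl
  · linarith
  · exact hk (by rw [hk_eq, show r = 1 by linarith, sub_self, zero_smul])

theorem resonance_set_diff_empty_general
    (k l : EuclideanSpace ℝ (Fin 2)) (hk : k ≠ 0) (hl : l ≠ 0) :
    sg k * ‖k‖ - sg l * ‖l‖ ≠ sg (k + l) * ‖k + l‖ ∧
    sg k * ‖k‖ - sg l * ‖l‖ ≠ -(sg (k + l) * ‖k + l‖) := by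
  constructor
  · simpa using sg_mul_norm_sub_ne hk hl (Or.inl rfl)
  · simpa using sg_mul_norm_sub_ne hk hl (Or.inr rfl)

/-- For nonzero `k, l ∈ ℝ²` with `m = k + l ≠ 0`, one never has
`sg(k)|k| − sg(l)|l| = sg(m)|m|` nor `sg(k)|k| − sg(l)|l| = −sg(m)|m|`; i.e. both
resonance sets are empty. -/
theorem resonance_set_diff_empty
    (k l : EuclideanSpace ℝ (Fin 2)) (hk : k ≠ 0) (hl : l ≠ 0) (hm : k + l ≠ 0) :
    sg k * ‖k‖ - sg l * ‖l‖ ≠ sg (k + l) * ‖k + l‖ ∧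
    sg k * ‖k‖ - sg l * ‖l‖ ≠ -(sg (k + l) * ‖k + l‖) :=
  resonance_set_diff_empty_general k l hk hl
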